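/- (Independence of the choice of deleted columns.) Let S be a list of m ≥ 1 triplets on an index set I ⊆ {1,…,n} with |I| = m+2, and let a, b, c, d ∈ I with a ≠ b and c ≠ d. Then ⟨cd⟩² · det(M_{ab}(S))² = ⟨ab⟩² · det(M_{cd}(S))² in the polynomial ring R. In particular, the rational function det(M_{ab}(S))² / ⟨ab⟩² ∈ ℚ(X) does not depend on the choice of the pair of deleted columns. -/

import Mathlib

open MvPolynomial

/-- The polynomial ring `ℚ[X_{m,i} : m ∈ {1,2}, 1 ≤ i ≤ n]` in `2n` indeterminates. -/
abbrev MHV.Poly (n : ℕ) := MvPolynomial (Fin 2 × Fin n) ℚ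

/-- The field of fractions `ℚ(X)`. -/
abbrev MHV.FF (n : ℕ) := FractionRing (MHV.Poly n)

namespace MHV

variable {n : ℕ}

/-- The bracket `⟨ij⟩ = X_{1,i}·X_{2,j} − X_{1,j}·X_{2,i}`. -/
noncomputable def bra (i j : Fin n) : Poly n :=
  X ((0 : Fin 2), i) * X ((1 : Fin 2), j) - X ((0 : Fin 2), j) * X ((1 : Fin 2), i)

/-- A triplet: an ordered triple of indices. -/
abbrev Triplet (n : ℕ) := Fin n × Fin n × Fin n

/-- The entries of a triplet are pairwise distinct. -/
def Triplet.Distinct (t : Triplet n) : Prop :=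
  t.1 ≠ t.2.1 ∧ t.1 ≠ t.2.2 ∧ t.2.1 ≠ t.2.2

/-- The set of indices used by a triplet. -/
def Triplet.indices (t : Triplet n) : Finset (Fin n) := {t.1, t.2.1, t.2.2}

/-- A triplet on the index set `I`: pairwise distinct entries, all belonging to `I`. -/
def Triplet.OnSet (I : Finset (Fin n)) (t : Triplet n) : Prop :=
  t.Distinct ∧ t.indices ⊆ I

/-- The row of the matrix `M(S)` corresponding to the triplet `t = (a,b,c)`:
entry `⟨bc⟩` in column `a`, `⟨ca⟩` in column `b`, `⟨ab⟩` in column `c`, `0` elsewhere. -/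
noncomputable def rowEntry (t : Triplet n) (c : Fin n) : Poly n :=
  if c = t.1 then bra t.2.1 t.2.2
  else if c = t.2.1 then bra t.2.2 t.1
  else if c = t.2.2 then bra t.1 t.2.1
  else 0

/-- The determinant of the matrix whose rows are indexed by the triplets of `S` and
whose columns are the columns of `M(S)` belonging to `cols` (in increasing order). -/
noncomputable def detCols (S : List (Triplet n)) (cols : Finset (Fin n)) : Poly n :=
  Matrix.det (Matrix.of fun r c : Fin S.length =>
    ((cols.sort (· ≤ ·))[c.1]?).elim 0 (rowEntry (S.get r)))

/-- The determinant of `M_{ab}(S)`: the matrix `M(S)` (columns indexed by `I`)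
with columns `a` and `b` deleted. -/
noncomputable def Mdet (S : List (Triplet n)) (I : Finset (Fin n)) (a b : Fin n) : Poly n :=
  detCols S ((I.erase a).erase b)

/-- The product `∏_{(a,b,c) ∈ S} ⟨ab⟩·⟨bc⟩·⟨ca⟩`. -/
noncomputable def denom (S : List (Triplet n)) : Poly n :=
  (S.map fun t => bra t.1 t.2.1 * bra t.2.1 t.2.2 * bra t.2.2 t.1).prod

/-- The canonical map from the polynomial ring to its field of fractions. -/
noncomputable def toFF : Poly n →+* FF n := algebraMap (Poly n) (FF n)

/-- The form `f_S = det(M_{ab}(S))² / (⟨ab⟩² · ∏_{(a,b,c) ∈ S} ⟨ab⟩⟨bc⟩⟨ca⟩)`,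
where `(a,b)` is the pair of the two smallest elements of `I`. -/
noncomputable def fForm (S : List (Triplet n)) (I : Finset (Fin n)) : FF n :=
  if h : 2 ≤ I.card then
    have h1 : I.Nonempty := Finset.card_pos.mp (by omega)
    have h2 : (I.erase (I.min' h1)).Nonempty := by
      rw [← Finset.card_pos, Finset.card_erase_of_mem (I.min'_mem h1)]; omega
    toFF (Mdet S I (I.min' h1) ((I.erase (I.min' h1)).min' h2)) ^ 2 /
      (toFF (bra (I.min' h1) ((I.erase (I.min' h1)).min' h2)) ^ 2 * toFF (denom S))
  else 0

/-- The set of all indices used by the triplets of `S`. -/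
def indexSet (S : List (Triplet n)) : Finset (Fin n) :=
  S.foldr (fun t acc => t.indices ∪ acc) ∅

/-- The non-vanishing condition: every nonempty subcollection consisting of `d` triplets
contains at least `d+2` distinct indices in total. -/
def NonVanishing (T : List (Triplet n)) : Prop :=
  ∀ S : List (Triplet n), S.Sublist T → S ≠ [] → S.length + 2 ≤ (indexSet S).card

/-- An MHV collection on `{1,…,n}`: a list of `n−2` triplets with pairwise
distinct entries (triplets on the full index set). -/
def IsMHV (n : ℕ) (T : List (Triplet n)) : Prop :=
  T.length = n - 2 ∧ ∀ t ∈ T, t.Distinct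

/-- The unordered pair `{i,j}` belongs to the doublet set `D(T)`:
`i` and `j` occur together in an odd number of triplets of `T`. -/
def InDoublets (T : List (Triplet n)) (i j : Fin n) : Prop :=
  Odd (T.countP fun t => decide (i ∈ t.indices ∧ j ∈ t.indices))

end MHV

section CoreDetAux
open Matrix

lemma core_det {R : Type*} [CommRing R] {m : ℕ} (M : Matrix (Fin m) (Fin (m+1)) R)
    (v : Fin (m+1) → R) (hker : ∀ r, ∑ j, v j * M r j = 0) (b c : Fin (m+1)) :
    (v c)^2 * (det (M.submatrix id b.succAbove))^2
      = (v b)^2 * (det (M.submatrix id c.succAbove))^2 := by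
  rcases eq_or_ne b c with rfl | hbc
  · ring
  obtain ⟨j', hj'⟩ := Fin.exists_succAbove_eq hbc.symm
  set A := M.submatrix id b.succAbove with hA
  have h1 : det (A.updateCol j' fun k => ∑ i, v (b.succAbove i) • A k i)
      = v c * det A := by
    rw [Matrix.det_updateCol_sum A j' (fun i => v (b.succAbove i))]
    rw [hj', smul_eq_mul]
  have hcol : ∀ k, (∑ i, v (b.succAbove i) • A k i) = (- v b) • M k b := by
    intro k
    have hk := hker k
    rw [Fin.sum_univ_succAbove (fun j => v j * M k j) b] at hk
    simp only [smul_eq_mul, hA, Matrix.submatrix_apply, id_eq]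
    linear_combination hk
  set B := A.updateCol j' (fun k => M k b) with hB
  have h2 : v c * det A = (- v b) * det B := by
    rw [← h1]
    rw [show (fun k => ∑ i, v (b.succAbove i) • A k i) = fun k => (- v b) • M k b
      from funext hcol]
    rw [show (fun k => (- v b) • M k b) = (- v b) • (fun k => M k b) from rfl]
    rw [Matrix.det_updateCol_smul]
  set σ : Fin m → Fin (m+1) := Function.update b.succAbove j' b with hσ
  have hBσ : B = M.submatrix id σ := by
    funext k l
    rcases eq_or_ne l j' with rfl | h
    · simp [hB, hσ, Matrix.updateCol_apply]
    · simp [hB, hσ, Matrix.updateCol_apply, h, Function.update_of_ne h, hA]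
  have hσc : ∀ j, σ j ≠ c := by
    intro j
    rcases eq_or_ne j j' with rfl | h
    · simpa [hσ] using hbc
    · rw [hσ, Function.update_of_ne h]
      intro hcEq
      exact h (Fin.succAbove_right_injective (hcEq.trans hj'.symm))
  have hσinj : Function.Injective σ := by
    intro x y hxy
    by_cases hx : x = j' <;> by_cases hy : y = j'
    · rw [hx, hy]
    · simp only [hσ, Function.update_apply, hx, hy, if_true, if_false] at hxy
      exact absurd hxy.symm (Fin.succAbove_ne b y)
    · simp only [hσ, Function.update_apply, hx, hy, if_true, if_false] at hxy
      exact absurd hxy (Fin.succAbove_ne b x)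
    · simp only [hσ, Function.update_apply, hx, hy, if_false] at hxy
      exact Fin.succAbove_right_injective hxy
  have hex : ∀ j, ∃ z, c.succAbove z = σ j := fun j => Fin.exists_succAbove_eq (hσc j)
  choose f hf using hex
  have hfinj : Function.Injective f := by
    intro x y hxy
    apply hσinj
    rw [← hf x, ← hf y, hxy]
  let π : Equiv.Perm (Fin m) := Equiv.ofBijective f (Finite.injective_iff_bijective.mp hfinj)
  have h3 : B = (M.submatrix id c.succAbove).submatrix id π := by
    funext k l
    have : (π l : Fin m) = f l := rfl
    simp [hBσ, Matrix.submatrix_apply, this, hf l]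
  have h6 : (det B)^2 = (det (M.submatrix id c.succAbove))^2 := by
    rw [h3, Matrix.det_permute', mul_pow]
    rcases Int.units_eq_one_or (Equiv.Perm.sign π) with h | h <;> rw [h] <;> norm_num
  have h5 : (v c)^2 * (det A)^2 = (v b)^2 * (det B)^2 := by
    have h2' := congrArg (· ^ 2) h2
    calc (v c)^2 * (det A)^2 = (v c * det A)^2 := by ring
    _ = ((-v b) * det B)^2 := h2'
    _ = (v b)^2 * (det B)^2 := by ring
  rw [h5, h6]

end CoreDetAux

namespace MHV
variable {n : ℕ}

lemma bra_anti (i j : Fin n) : bra j i = - bra i j := by unfold bra; ring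

lemma bra_self (i : Fin n) : bra i i = 0 := by unfold bra; ring

lemma bra_ne_zero {i j : Fin n} (h : i ≠ j) : bra i j ≠ 0 := by
  intro h0
  have h1 := congrArg (MvPolynomial.eval fun p : Fin 2 × Fin n =>
    if p = ((0:Fin 2), i) then (1:ℚ) else if p = ((1:Fin 2), j) then 1 else 0) h0
  simp [bra, Prod.ext_iff, h, h.symm] at h1

lemma row_kernel {I : Finset (Fin n)} {t : Triplet n} (ht : t.OnSet I) (a : Fin n) :
    ∑ j ∈ I, bra a j * rowEntry t j = 0 := by
  obtain ⟨⟨h12, h13, h23⟩, hsub⟩ := ht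
  have h0 : ∀ x ∈ I, x ∉ t.indices → bra a x * rowEntry t x = 0 := by
    intro x _ hx
    simp only [Triplet.indices, Finset.mem_insert, Finset.mem_singleton, not_or] at hx
    obtain ⟨hx1, hx2, hx3⟩ := hx
    simp [rowEntry, hx1, hx2, hx3]
  rw [← Finset.sum_subset hsub h0]
  show ∑ j ∈ ({t.1, t.2.1, t.2.2} : Finset (Fin n)), bra a j * rowEntry t j = 0
  rw [Finset.sum_insert (by simp [h12, h13]), Finset.sum_insert (by simp [h23]),
    Finset.sum_singleton]
  rw [show rowEntry t t.1 = bra t.2.1 t.2.2 by simp [rowEntry]]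
  rw [show rowEntry t t.2.1 = bra t.2.2 t.1 by simp [rowEntry, Ne.symm h12]]
  rw [show rowEntry t t.2.2 = bra t.1 t.2.1 by simp [rowEntry, Ne.symm h13, Ne.symm h23]]
  unfold bra; ring

lemma sum_sort {M : Type*} [AddCommMonoid M] (J : Finset (Fin n)) (g : Fin n → M) :
    ∑ k : Fin ((J.sort (· ≤ ·)).length), g ((J.sort (· ≤ ·))[(k:ℕ)]) = ∑ j ∈ J, g j := by
  apply Finset.sum_bij (fun (k : Fin ((J.sort (· ≤ ·)).length)) _ => (J.sort (· ≤ ·))[(k:ℕ)])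
  · intro k _
    exact (Finset.mem_sort _).mp (List.getElem_mem _)
  · intro k1 _ k2 _ h
    exact Fin.ext (((Finset.sort_nodup _ _).getElem_inj_iff).mp h)
  · intro j hj
    obtain ⟨kk, hk, he⟩ := List.mem_iff_getElem.mp ((Finset.mem_sort (α := Fin n) (· ≤ ·)).mpr hj)
    exact ⟨⟨kk, hk⟩, Finset.mem_univ _, he⟩
  · intro k _; rfl

lemma sort_erase (J : Finset (Fin n)) (b : Fin n) :
    (J.erase b).sort (· ≤ ·) = (J.sort (· ≤ ·)).erase b := by
  have hperm : List.Perm ((J.erase b).sort (· ≤ ·)) ((J.sort (· ≤ ·)).erase b) := by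
    rw [← Multiset.coe_eq_coe]
    calc (↑((J.erase b).sort (· ≤ ·)) : Multiset (Fin n)) = (J.erase b).val :=
          Finset.sort_eq _ _
    _ = J.val.erase b := Finset.erase_val _ _
    _ = (↑(J.sort (· ≤ ·)) : Multiset (Fin n)).erase b := by rw [Finset.sort_eq]
    _ = ↑((J.sort (· ≤ ·)).erase b) := Multiset.coe_erase _ _
  exact List.Perm.eq_of_pairwise' (Finset.pairwise_sort _ _)
    (List.Pairwise.sublist (List.erase_sublist) (Finset.pairwise_sort _ _)) hperm

lemma detCols_eq (S : List (Triplet n)) (cols : Finset (Fin n))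
    (h : cols.card = S.length) :
    detCols S cols = Matrix.det (Matrix.of fun r k : Fin S.length =>
      rowEntry (S.get r) ((cols.sort (· ≤ ·))[(k:ℕ)]'(by
        rw [Finset.length_sort, h]; exact k.isLt))) := by
  unfold detCols
  congr 1
  funext r k
  have hk : (k : ℕ) < (cols.sort (· ≤ ·)).length := by
    rw [Finset.length_sort, h]; exact k.isLt
  rw [Matrix.of_apply, Matrix.of_apply, List.getElem?_eq_getElem hk]
  rfl

lemma step (S : List (Triplet n)) (I : Finset (Fin n))
    (hcard : I.card = S.length + 2)
    (hon : ∀ t ∈ S, Triplet.OnSet I t)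
    (a b c : Fin n) (ha : a ∈ I) (hb : b ∈ I) (hc : c ∈ I)
    (hba : b ≠ a) (hca : c ≠ a) :
    bra a c ^ 2 * Mdet S I a b ^ 2 = bra a b ^ 2 * Mdet S I a c ^ 2 := by
  have hJcard : (I.erase a).card = S.length + 1 := by
    rw [Finset.card_erase_of_mem ha, hcard]
    omega
  set L := (I.erase a).sort (· ≤ ·) with hLdef
  have hL : L.length = S.length + 1 := by rw [hLdef, Finset.length_sort, hJcard]
  have hbJ : b ∈ I.erase a := Finset.mem_erase.mpr ⟨hba, hb⟩
  have hcJ : c ∈ I.erase a := Finset.mem_erase.mpr ⟨hca, hc⟩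
  have hbL : b ∈ L := (Finset.mem_sort _).mpr hbJ
  have hcL : c ∈ L := (Finset.mem_sort _).mpr hcJ
  set Mmat : Matrix (Fin S.length) (Fin (S.length + 1)) (Poly n) :=
    Matrix.of (fun r k => rowEntry (S.get r) (L[(k:ℕ)]'(by
      rw [hL]; exact k.isLt))) with hMmat
  set v : Fin (S.length + 1) → Poly n := fun k =>
    bra a (L[(k:ℕ)]'(by rw [hL]; exact k.isLt)) with hv
  have hker : ∀ r, ∑ k, v k * Mmat r k = 0 := by
    intro r
    have hrow : ∑ j ∈ I, bra a j * rowEntry (S.get r) j = 0 :=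
      row_kernel (hon (S.get r) (List.get_mem S r)) a
    have hJsum : ∑ j ∈ I.erase a, bra a j * rowEntry (S.get r) j = 0 := by
      rw [← Finset.add_sum_erase I _ ha] at hrow
      simpa [bra_self] using hrow
    rw [← hJsum, ← sum_sort (I.erase a) (fun j => bra a j * rowEntry (S.get r) j)]
    exact Fintype.sum_equiv (finCongr hL.symm) _ _ (fun x => by
      simp [hv, hMmat, Fin.coe_cast, hLdef])
  have hsucc : ∀ (p : Fin (S.length + 1)) (i : Fin S.length),
      ((p.succAbove i : Fin (S.length + 1)) : ℕ) =
        if (i:ℕ) < (p:ℕ) then (i:ℕ) else (i:ℕ) + 1 := by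
    intro p i
    unfold Fin.succAbove
    split <;> rename_i hh <;> rw [Fin.lt_def] at hh <;>
      simp only [Fin.coe_castSucc, Fin.val_succ] at hh ⊢
    · rw [if_pos hh]
    · rw [if_neg hh]
  have key : ∀ (x : Fin n), x ∈ L → ∀ (kx : Fin (S.length + 1)),
      (kx:ℕ) = L.idxOf x →
      Mdet S I a x = (Mmat.submatrix id kx.succAbove).det := by
    intro x hxL kx hkx
    have hxJ : x ∈ I.erase a := (Finset.mem_sort _).mp hxL
    have hcardx : ((I.erase a).erase x).card = S.length := by
      rw [Finset.card_erase_of_mem hxJ, hJcard]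
      omega
    rw [Mdet, detCols_eq S _ hcardx]
    congr 1
    funext r k
    have hsort : ((I.erase a).erase x).sort (· ≤ ·) = L.eraseIdx (L.idxOf x) := by
      rw [sort_erase, ← hLdef, List.erase_eq_eraseIdx_of_idxOf rfl]
    have hidx : ((kx.succAbove k : Fin (S.length + 1)) : ℕ) =
        if (k:ℕ) < L.idxOf x then (k:ℕ) else (k:ℕ) + 1 := by
      rw [hsucc, hkx]
    rw [Matrix.of_apply, Matrix.submatrix_apply, id_eq, hMmat, Matrix.of_apply]
    congr 1
    simp only [hsort, hidx]
    rw [List.getElem_eraseIdx]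
    split_ifs <;> rfl
    simp [Finset.length_sort]
  have hkbl : L.idxOf b < L.length := List.idxOf_lt_length_iff.mpr hbL
  have hkcl : L.idxOf c < L.length := List.idxOf_lt_length_iff.mpr hcL
  have e1 := key b hbL ⟨L.idxOf b, by omega⟩ rfl
  have e2 := key c hcL ⟨L.idxOf c, by omega⟩ rfl
  have hvb : v ⟨L.idxOf b, by omega⟩ = bra a b := by
    simp only [hv]; congr 1; exact List.getElem_idxOf hkbl
  have hvc : v ⟨L.idxOf c, by omega⟩ = bra a c := by
    simp only [hv]; congr 1; exact List.getElem_idxOf hkcl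
  rw [e1, e2, ← hvb, ← hvc]
  exact core_det Mmat v hker _ _

end MHV

/-- independence of the choice of deleted columns: for a list `S` of
`m ≥ 1` triplets on an index set `I` with `|I| = m+2` and pairs `a ≠ b`, `c ≠ d` in `I`,
`⟨cd⟩² · det(M_{ab}(S))² = ⟨ab⟩² · det(M_{cd}(S))²`; in particular
`det(M_{ab}(S))²/⟨ab⟩²` does not depend on the choice of the deleted columns. -/
theorem statement14 {n : ℕ} (hn : 3 ≤ n)
    (S : List (MHV.Triplet n)) (I : Finset (Fin n))
    (hS : S ≠ []) (hcard : I.card = S.length + 2)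
    (hon : ∀ t ∈ S, MHV.Triplet.OnSet I t)
    (a b c d : Fin n) (ha : a ∈ I) (hb : b ∈ I) (hc : c ∈ I) (hd : d ∈ I)
    (hab : a ≠ b) (hcd : c ≠ d) :
    MHV.bra c d ^ 2 * MHV.Mdet S I a b ^ 2 = MHV.bra a b ^ 2 * MHV.Mdet S I c d ^ 2 := by
  clear hn hS
  have Mdet_comm : ∀ x y : Fin n, MHV.Mdet S I x y = MHV.Mdet S I y x := by
    intro x y; unfold MHV.Mdet
    congr 1
    ext z
    simp only [Finset.mem_erase]
    tauto
  have bra_sq : ∀ x y : Fin n, MHV.bra x y ^ 2 = MHV.bra y x ^ 2 := by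
    intro x y; rw [MHV.bra_anti x y]; ring
  by_cases hac : a = c
  · subst hac
    exact MHV.step S I hcard hon a b d ha hb hd hab.symm hcd.symm
  · by_cases had : a = d
    · subst had
      rw [Mdet_comm c a, bra_sq c a]
      exact MHV.step S I hcard hon a b c ha hb hc hab.symm (Ne.symm hac)
    · have h1 := MHV.step S I hcard hon a b c ha hb hc hab.symm (Ne.symm hac)
      have h2 := MHV.step S I hcard hon c a d hc ha hd hac hcd.symm
      apply mul_left_cancel₀ (pow_ne_zero 2 (MHV.bra_ne_zero hac))
      calc MHV.bra a c ^ 2 * (MHV.bra c d ^ 2 * MHV.Mdet S I a b ^ 2)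
          = MHV.bra c d ^ 2 * (MHV.bra a c ^ 2 * MHV.Mdet S I a b ^ 2) := by ring
        _ = MHV.bra c d ^ 2 * (MHV.bra a b ^ 2 * MHV.Mdet S I a c ^ 2) := by rw [h1]
        _ = MHV.bra a b ^ 2 * (MHV.bra c d ^ 2 * MHV.Mdet S I c a ^ 2) := by
            rw [Mdet_comm a c]; ring
        _ = MHV.bra a b ^ 2 * (MHV.bra c a ^ 2 * MHV.Mdet S I c d ^ 2) := by rw [h2]
        _ = MHV.bra a c ^ 2 * (MHV.bra a b ^ 2 * MHV.Mdet S I c d ^ 2) := by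
            rw [bra_sq c a]; ring
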